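/- arXiv:1511.00756 — 9 statements merged into one kernel-verified Lean document; each statement's English description precedes it below -/
import Mathlib

section
/- The function G(v,y) = (√(y²−4v) − y)/v is a first integral of the eigenvector field r₁: at every point (v,y) with v ≠ 0 and y² > 4v, the gradient of G is orthogonal to r₁(v,y) = (2v, y − √(y²−4v)), i.e. 2v·∂G/∂v + (y − √(y²−4v))·∂G/∂y = 0. Consequently G is constant along integral curves of r₁, so the 1-rarefaction curve through a point (v_L, y_L) with v_L ≠ 0, y_L² > 4v_L is given by the relation √(y²−4v) − y = (v/v_L)(√(y_L²−4v_L) − y_L). -/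
/-- The first integral of the eigenvector field r₁: G(v,y) = (√(y²−4v) − y)/v. -/
noncomputable def Gfun (v y : ℝ) : ℝ := (Real.sqrt (y ^ 2 - 4 * v) - y) / v

/-!
Write `q = √(y² − 4v)`. The partial derivatives of `G = (q − y)/v` simplify, using
`q² = y² − 4v`, to `∂G/∂v = −(y − q)² / (2 q v²)` and `∂G/∂y = (y − q) / (q v)`, so
`2v · ∂G/∂v + (y − q) · ∂G/∂y = 0` is a rational identity in `q`, `y`, `v`. Along an integral
curve of `r₁` the chain rule then gives `d/dt G(V, Y) = 0`, and `G` is constant on the interval.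
-/

noncomputable def Gfun_partial_v (v y : ℝ) : ℝ :=
  -(y - Real.sqrt (y ^ 2 - 4 * v)) ^ 2 / (2 * Real.sqrt (y ^ 2 - 4 * v) * v ^ 2)

noncomputable def Gfun_partial_y (v y : ℝ) : ℝ :=
  (y - Real.sqrt (y ^ 2 - 4 * v)) / (Real.sqrt (y ^ 2 - 4 * v) * v)

theorem two_mul_Gfun_partial_v_add_Gfun_partial_y {v y : ℝ} (hv : v ≠ 0) (hvy : y ^ 2 > 4 * v) :
    2 * v * Gfun_partial_v v y + (y - Real.sqrt (y ^ 2 - 4 * v)) * Gfun_partial_y v y = 0 := by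
  have hq : Real.sqrt (y ^ 2 - 4 * v) ≠ 0 := (Real.sqrt_pos.mpr (by linarith)).ne'
  unfold Gfun_partial_v Gfun_partial_y
  field_simp
  ring

theorem HasDerivAt.Gfun_comp {V Y : ℝ → ℝ} {V' Y' t : ℝ} (hV : HasDerivAt V V' t)
    (hY : HasDerivAt Y Y' t) (hVt : V t ≠ 0) (hVYt : Y t ^ 2 > 4 * V t) :
    HasDerivAt (fun s => Gfun (V s) (Y s))
      (Gfun_partial_v (V t) (Y t) * V' + Gfun_partial_y (V t) (Y t) * Y') t := by
  have hpos : 0 < Y t ^ 2 - 4 * V t := by linarith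
  have hq : Real.sqrt (Y t ^ 2 - 4 * V t) ≠ 0 := (Real.sqrt_pos.mpr hpos).ne'
  have hqq : Real.sqrt (Y t ^ 2 - 4 * V t) ^ 2 = Y t ^ 2 - 4 * V t := Real.sq_sqrt hpos.le
  have hG := ((((hY.fun_pow 2).fun_sub (hV.const_mul 4)).sqrt hpos.ne').fun_sub hY).fun_div hV hVt
  refine hG.congr_deriv ?_
  unfold Gfun_partial_v Gfun_partial_y
  simp only [Nat.cast_ofNat, Nat.add_one_sub_one, pow_one]
  field_simp
  linear_combination (-V') * hqq

theorem Gfun_eq_of_integral_curve {a b : ℝ} {V Y : ℝ → ℝ}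
    (hdom : ∀ t ∈ Set.Ioo a b, V t ≠ 0 ∧ Y t ^ 2 > 4 * V t)
    (hV : ∀ t ∈ Set.Ioo a b, HasDerivAt V (2 * V t) t)
    (hY : ∀ t ∈ Set.Ioo a b, HasDerivAt Y (Y t - Real.sqrt (Y t ^ 2 - 4 * V t)) t)
    {t₀ t : ℝ} (ht₀ : t₀ ∈ Set.Ioo a b) (ht : t ∈ Set.Ioo a b) :
    Gfun (V t) (Y t) = Gfun (V t₀) (Y t₀) := by
  have hG : ∀ s ∈ Set.Ioo a b, HasDerivAt (fun s => Gfun (V s) (Y s)) 0 s := fun s hs => by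
    obtain ⟨hVs, hVYs⟩ := hdom s hs
    refine ((hV s hs).Gfun_comp (hY s hs) hVs hVYs).congr_deriv ?_
    rw [← two_mul_Gfun_partial_v_add_Gfun_partial_y hVs hVYs]
    ring
  exact isOpen_Ioo.is_const_of_deriv_eq_zero isPreconnected_Ioo
    (fun s hs => (hG s hs).differentiableAt.differentiableWithinAt) (fun s hs => (hG s hs).deriv)
    ht ht₀

theorem stmt3 :
    (∀ v y : ℝ, v ≠ 0 → y ^ 2 > 4 * v →
      2 * v * deriv (fun s => Gfun s y) v +
        (y - Real.sqrt (y ^ 2 - 4 * v)) * deriv (fun s => Gfun v s) y = 0) ∧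
    (∀ (a b vL yL : ℝ) (V Y : ℝ → ℝ),
      vL ≠ 0 → yL ^ 2 > 4 * vL →
      (∀ t ∈ Set.Ioo a b, V t ≠ 0 ∧ (Y t) ^ 2 > 4 * V t) →
      (∀ t ∈ Set.Ioo a b, HasDerivAt V (2 * V t) t) →
      (∀ t ∈ Set.Ioo a b, HasDerivAt Y (Y t - Real.sqrt ((Y t) ^ 2 - 4 * V t)) t) →
      ∀ t0 ∈ Set.Ioo a b, V t0 = vL → Y t0 = yL →
        ∀ t ∈ Set.Ioo a b,
          Real.sqrt ((Y t) ^ 2 - 4 * V t) - Y t =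
            (V t / vL) * (Real.sqrt (yL ^ 2 - 4 * vL) - yL)) := by
  constructor
  · intro v y hv hvy
    have hGv : deriv (fun s => Gfun s y) v = Gfun_partial_v v y := by
      simpa using ((hasDerivAt_id v).Gfun_comp (hasDerivAt_const v y) hv hvy).deriv
    have hGy : deriv (fun s => Gfun v s) y = Gfun_partial_y v y := by
      simpa using ((hasDerivAt_const y v).Gfun_comp (hasDerivAt_id y) hv hvy).deriv
    rw [hGv, hGy]
    exact two_mul_Gfun_partial_v_add_Gfun_partial_y hv hvy
  · intro a b vL yL V Y hvL _ hdom hV hY t0 ht0 hVt0 hYt0 t ht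
    have hG := Gfun_eq_of_integral_curve hdom hV hY ht0 ht
    rw [hVt0, hYt0] at hG
    unfold Gfun at hG
    rw [div_eq_div_iff (hdom t ht).1 hvL] at hG
    field_simp
    linarith
end

section
/- Let v_L > 0, y_L < 0, y_L² > 4v_L, and set R_L = √(y_L²−4v_L), y_G = −4v_L/(R_L − y_L), v_G = y_G²/4. Then the point U_G = (v_G, y_G) satisfies: (i) y_G² = 4v_G (U_G lies on the parabola y² = 4v); (ii) √(y_G²−4v_G) − y_G = (v_G/v_L)(R_L − y_L) (U_G lies on the 1-rarefaction curve R₁ through (v_L, y_L)); and (iii) the eigenvector r₁(U_G) = (2v_G, y_G) is parallel to the tangent vector (y_G/2, 1) of the parabola v = y²/4 at U_G, so the curve R₁ meets the parabola y² = 4v tangentially at U_G. -/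
/-! On the parabola `y² = 4v` the discriminant `y² - 4v` vanishes, so the level-set equation of the
1-rarefaction curve through `(v_L, y_L)` reduces to `-y = (y² / 4v_L)(R_L - y_L)`, i.e. to
`y (R_L - y_L) = -4 v_L`, which is exactly how `y_G` is chosen. At such a point
`r₁ = (2v, y) = (y² / 2, y) = y · (y / 2, 1)`, so the curve is tangent to the parabola there. -/

theorem rarefaction_level_eq_of_mul_eq {vL d y : ℝ} (hvL : vL ≠ 0) (hy : y * d = -4 * vL) :
    √(y ^ 2 - 4 * (y ^ 2 / 4)) - y = (y ^ 2 / 4 / vL) * d := by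
  have hdisc : y ^ 2 - 4 * (y ^ 2 / 4) = 0 := by ring
  rw [hdisc, Real.sqrt_zero]
  field_simp
  linear_combination -y * hy

theorem parabola_eigenvector_parallel_tangent (y : ℝ) :
    ∃ c : ℝ, 2 * (y ^ 2 / 4) = c * (y / 2) ∧ y = c * 1 :=
  ⟨y, by ring, by ring⟩

theorem stmt5_general (vL yL RL yG vG : ℝ)
    (hvL : 0 < vL) (hyL : yL < 0)
    (hRL : RL = Real.sqrt (yL ^ 2 - 4 * vL))
    (hyG : yG = -4 * vL / (RL - yL)) (hvG : vG = yG ^ 2 / 4) :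
    yG ^ 2 = 4 * vG ∧
    Real.sqrt (yG ^ 2 - 4 * vG) - yG = (vG / vL) * (RL - yL) ∧
    ∃ c : ℝ, 2 * vG = c * (yG / 2) ∧ yG = c * 1 := by
  have hden : 0 < RL - yL := by
    rw [hRL]; linarith [Real.sqrt_nonneg (yL ^ 2 - 4 * vL)]
  have hcross : yG * (RL - yL) = -4 * vL := (eq_div_iff hden.ne').mp hyG
  subst hvG
  exact ⟨by ring, rarefaction_level_eq_of_mul_eq hvL.ne' hcross,
    parabola_eigenvector_parallel_tangent yG⟩

theorem stmt5 (vL yL RL yG vG : ℝ)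
    (hvL : 0 < vL) (hyL : yL < 0) (hL : yL ^ 2 > 4 * vL)
    (hRL : RL = Real.sqrt (yL ^ 2 - 4 * vL))
    (hyG : yG = -4 * vL / (RL - yL)) (hvG : vG = yG ^ 2 / 4) :
    yG ^ 2 = 4 * vG ∧
    Real.sqrt (yG ^ 2 - 4 * vG) - yG = (vG / vL) * (RL - yL) ∧
    ∃ c : ℝ, 2 * vG = c * (yG / 2) ∧ yG = c * 1 :=
  stmt5_general vL yL RL yG vG hvL hyL hRL hyG hvG
end

section
/- Let v_L > 0, y_L² ≥ 4v_L, and let (v, y) with v > 0 and (v, y) ≠ (v_L, y_L). If there exists s ∈ ℝ satisfying the Rankine–Hugoniot conditions s(v − v_L) = y/v − y_L/v_L and s(y − y_L) = 1/v − 1/v_L, then v ≠ v_L and y = v·y_L/(2v_L) + y_L/2 + σ·(v − v_L)·√(y_L²−4v_L)/(2v_L) for some σ ∈ {+1, −1}; that is, (v, y) lies on one of the two shock curves S₁ (σ = −1) or S₂ (σ = +1) through (v_L, y_L). -/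
/-!
Eliminating the shock speed `s` between the two Rankine–Hugoniot conditions leaves a single
relation, which after clearing denominators is a quadratic form in the jumps `v - vL`, `y - yL`:
`vL (y - yL)² - yL (v - vL)(y - yL) + (v - vL)² = 0`. Its discriminant in `y - yL` is
`(v - vL)² (yL² - 4 vL)`, so the two roots give the two shock curves. Finally `v = vL` would force
`y = yL` through the first condition, so a genuine jump has `v ≠ vL`.
-/

lemma eq_of_rankineHugoniot_of_eq {vL yL y s : ℝ} (hvL : vL ≠ 0)
    (hRH1 : s * (vL - vL) = y / vL - yL / vL) : y = yL := by
  rw [sub_self, mul_zero, ← sub_div, eq_comm, div_eq_zero_iff] at hRH1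
  exact sub_eq_zero.mp (hRH1.resolve_right hvL)

lemma rankineHugoniot_quadratic {vL yL v y s : ℝ} (hvL : vL ≠ 0) (hv : v ≠ 0)
    (hRH1 : s * (v - vL) = y / v - yL / vL)
    (hRH2 : s * (y - yL) = 1 / v - 1 / vL) :
    vL * (y - yL) ^ 2 - yL * (v - vL) * (y - yL) + (v - vL) ^ 2 = 0 := by
  have hs : (y / v - yL / vL) * (y - yL) = (1 / v - 1 / vL) * (v - vL) := by
    rw [← hRH1, ← hRH2]; ring
  field_simp at hs
  linear_combination hs

lemma exists_sign_of_shock_quadratic {vL yL w z : ℝ} (hvL : vL ≠ 0) (hL : 4 * vL ≤ yL ^ 2)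
    (h : vL * z ^ 2 - yL * w * z + w ^ 2 = 0) :
    ∃ σ : ℝ, (σ = 1 ∨ σ = -1) ∧
      z = (yL * w + σ * w * Real.sqrt (yL ^ 2 - 4 * vL)) / (2 * vL) := by
  set D := Real.sqrt (yL ^ 2 - 4 * vL)
  have hD : D * D = yL ^ 2 - 4 * vL := Real.mul_self_sqrt (by linarith)
  have hdiscrim : discrim vL (-(yL * w)) (w ^ 2) = (w * D) * (w * D) := by
    rw [discrim]; linear_combination (-w ^ 2) * hD
  have hz : vL * (z * z) + -(yL * w) * z + w ^ 2 = 0 := by linear_combination h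
  rcases (quadratic_eq_zero_iff hvL hdiscrim z).mp hz with hz | hz
  · exact ⟨1, Or.inl rfl, by rw [hz]; ring⟩
  · exact ⟨-1, Or.inr rfl, by rw [hz]; ring⟩

theorem stmt6 (vL yL v y s : ℝ)
    (hvL : 0 < vL) (hL : yL ^ 2 ≥ 4 * vL)
    (hv : 0 < v) (hne : (v, y) ≠ (vL, yL))
    (hRH1 : s * (v - vL) = y / v - yL / vL)
    (hRH2 : s * (y - yL) = 1 / v - 1 / vL) :
    v ≠ vL ∧
    ∃ σ : ℝ, (σ = 1 ∨ σ = -1) ∧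
      y = v * yL / (2 * vL) + yL / 2 +
        σ * (v - vL) * Real.sqrt (yL ^ 2 - 4 * vL) / (2 * vL) := by
  have hvne : v ≠ vL := by
    rintro rfl
    exact hne (by rw [eq_of_rankineHugoniot_of_eq hv.ne' hRH1])
  refine ⟨hvne, ?_⟩
  obtain ⟨σ, hσ, hy⟩ := exists_sign_of_shock_quadratic hvL.ne' hL
    (rankineHugoniot_quadratic hvL.ne' hv.ne' hRH1 hRH2)
  refine ⟨σ, hσ, ?_⟩
  rw [sub_eq_iff_eq_add.mp hy]
  field_simp
  ring
end

section
/- Let v_L > 0, v > 0, v ≠ v_L, y_L² ≥ 4v_L, and R_L = √(y_L²−4v_L). If y = v(y_L − R_L)/(2v_L) + (y_L + R_L)/2 (the 1-shock curve S₁ through (v_L, y_L)), then with s₁ = (−y_L − R_L)/(2v·v_L) both Rankine–Hugoniot conditions hold: s₁(v − v_L) = y/v − y_L/v_L and s₁(y − y_L) = 1/v − 1/v_L. Likewise, if y = v(y_L + R_L)/(2v_L) + (y_L − R_L)/2 (the 2-shock curve S₂), then with s₂ = (−y_L + R_L)/(2v·v_L) both Rankine–Hugoniot conditions hold. -/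
/-!
Along a straight line `y = yL + m (v - vL)` through the left state, the first Rankine–Hugoniot
condition holds for `s = (m vL - yL) / (v vL)`, and the second one then reduces to
`vL m² - yL m + 1 = 0`. The slopes of `S₁` and `S₂` are the two roots `(yL ∓ RL) / (2 vL)` of this
quadratic, whose discriminant is `yL² - 4 vL = RL²`.
-/

def IsRankineHugoniot (vL yL v y s : ℝ) : Prop :=
  s * (v - vL) = y / v - yL / vL ∧ s * (y - yL) = 1 / v - 1 / vL

theorem isRankineHugoniot_of_slope_root {vL yL v y s m : ℝ} (hvL : vL ≠ 0) (hv : v ≠ 0)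
    (hm : vL * (m * m) - yL * m + 1 = 0) (hy : y = yL + m * (v - vL))
    (hs : s = (m * vL - yL) / (v * vL)) :
    IsRankineHugoniot vL yL v y s := by
  subst hy hs
  constructor
  · field_simp
    ring
  · field_simp
    linear_combination (v - vL) * hm

theorem stmt7_general (vL yL v RL : ℝ)
    (hvL : 0 < vL) (hv : 0 < v) (hL : yL ^ 2 ≥ 4 * vL)
    (hRL : RL = Real.sqrt (yL ^ 2 - 4 * vL)) :
    (∀ y : ℝ, y = v * (yL - RL) / (2 * vL) + (yL + RL) / 2 →
      ((-yL - RL) / (2 * v * vL)) * (v - vL) = y / v - yL / vL ∧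
      ((-yL - RL) / (2 * v * vL)) * (y - yL) = 1 / v - 1 / vL) ∧
    (∀ y : ℝ, y = v * (yL + RL) / (2 * vL) + (yL - RL) / 2 →
      ((-yL + RL) / (2 * v * vL)) * (v - vL) = y / v - yL / vL ∧
      ((-yL + RL) / (2 * v * vL)) * (y - yL) = 1 / v - 1 / vL) := by
  have hdisc : discrim vL (-yL) 1 = RL * RL := by
    rw [discrim, hRL, Real.mul_self_sqrt (by linarith)]
    ring
  have root {m : ℝ} (hm : m = (-(-yL) + RL) / (2 * vL) ∨ m = (-(-yL) - RL) / (2 * vL)) :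
      vL * (m * m) - yL * m + 1 = 0 := by
    linear_combination (quadratic_eq_zero_iff hvL.ne' hdisc m).2 hm
  constructor
  · rintro y rfl
    exact isRankineHugoniot_of_slope_root hvL.ne' hv.ne' (root (Or.inr rfl))
      (by field_simp; ring) (by field_simp; ring)
  · rintro y rfl
    exact isRankineHugoniot_of_slope_root hvL.ne' hv.ne' (root (Or.inl rfl))
      (by field_simp; ring) (by field_simp; ring)

theorem stmt7 (vL yL v RL : ℝ)
    (hvL : 0 < vL) (hv : 0 < v) (hne : v ≠ vL) (hL : yL ^ 2 ≥ 4 * vL)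
    (hRL : RL = Real.sqrt (yL ^ 2 - 4 * vL)) :
    (∀ y : ℝ, y = v * (yL - RL) / (2 * vL) + (yL + RL) / 2 →
      ((-yL - RL) / (2 * v * vL)) * (v - vL) = y / v - yL / vL ∧
      ((-yL - RL) / (2 * v * vL)) * (y - yL) = 1 / v - 1 / vL) ∧
    (∀ y : ℝ, y = v * (yL + RL) / (2 * vL) + (yL - RL) / 2 →
      ((-yL + RL) / (2 * v * vL)) * (v - vL) = y / v - yL / vL ∧
      ((-yL + RL) / (2 * v * vL)) * (y - yL) = 1 / v - 1 / vL) :=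
  stmt7_general vL yL v RL hvL hv hL hRL
end

section
/- Let v_L > 0, y_L < 0, y_L² > 4v_L, R_L = √(y_L²−4v_L), and set y_D = y_L − R_L, v_D = (y_L − R_L)²/4, U_D = (v_D, y_D). Then: (i) y_D² = 4v_D (U_D lies on the parabola y² = 4v); (ii) y_D = v_D(y_L + R_L)/(2v_L) + (y_L − R_L)/2, i.e. U_D lies on the 2-shock curve S₂ through (v_L, y_L); (iii) √(y_D²−4v_D) − y_D = R_L − y_L, i.e. U_D lies on the 2-rarefaction curve R₂ through (v_L, y_L); and (iv) the slope (y_L + R_L)/(2v_L) of the line S₂ equals the slope 2/y_D of the parabola v = y²/4 at U_D, so S₂ is tangent to the parabola y² = 4v at U_D. -/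
/-!
The numbers `yL ± RL` are the roots of `t ^ 2 - 2 yL t + 4 vL`, so by Vieta
`(yL + RL) * yD = 4 vL`: the slope of `S₂` is `2 / yD`, the slope of the parabola `v = y ^ 2 / 4`
at `U_D`. Since `S₂` also has intercept `yD / 2`, it is the tangent line there. On the parabola
the discriminant `y ^ 2 - 4 v` vanishes, which gives the rarefaction identity.
-/

lemma add_mul_sub_eq_of_sq_eq {y v R : ℝ} (hR : R ^ 2 = y ^ 2 - 4 * v) :
    (y + R) * (y - R) = 4 * v := by
  linear_combination -hR

lemma sub_ne_zero_of_sq_eq {y v R : ℝ} (hv : v ≠ 0) (hR : R ^ 2 = y ^ 2 - 4 * v) :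
    y - R ≠ 0 := by
  intro h
  have := add_mul_sub_eq_of_sq_eq hR
  rw [h, mul_zero] at this
  exact hv (by linarith)

lemma add_div_eq_div_sub_of_sq_eq {y v R : ℝ} (hv : v ≠ 0) (hR : R ^ 2 = y ^ 2 - 4 * v) :
    (y + R) / (2 * v) = 2 / (y - R) := by
  rw [div_eq_div_iff (by positivity) (sub_ne_zero_of_sq_eq hv hR)]
  linear_combination add_mul_sub_eq_of_sq_eq hR

lemma eq_tangent_parabola {y : ℝ} (hy : y ≠ 0) : y = y ^ 2 / 4 * (2 / y) + y / 2 := by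
  field_simp
  ring

lemma sqrt_sub_four_mul_sq_div_four (y : ℝ) : Real.sqrt (y ^ 2 - 4 * (y ^ 2 / 4)) = 0 := by
  rw [show y ^ 2 - 4 * (y ^ 2 / 4) = 0 by ring, Real.sqrt_zero]

theorem stmt10_general (vL yL RL yD vD : ℝ)
    (hvL : 0 < vL) (hL : yL ^ 2 > 4 * vL)
    (hRL : RL = Real.sqrt (yL ^ 2 - 4 * vL))
    (hyD : yD = yL - RL) (hvD : vD = (yL - RL) ^ 2 / 4) :
    yD ^ 2 = 4 * vD ∧
    yD = vD * (yL + RL) / (2 * vL) + (yL - RL) / 2 ∧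
    Real.sqrt (yD ^ 2 - 4 * vD) - yD = RL - yL ∧
    (yL + RL) / (2 * vL) = 2 / yD := by
  subst hyD hvD
  have hR : RL ^ 2 = yL ^ 2 - 4 * vL := hRL ▸ Real.sq_sqrt (by linarith)
  have hslope := add_div_eq_div_sub_of_sq_eq hvL.ne' hR
  refine ⟨by ring, ?_, ?_, hslope⟩
  · rw [mul_div_assoc, hslope]
    exact eq_tangent_parabola (sub_ne_zero_of_sq_eq hvL.ne' hR)
  · rw [sqrt_sub_four_mul_sq_div_four]
    ring

theorem stmt10 (vL yL RL yD vD : ℝ)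
    (hvL : 0 < vL) (hyL : yL < 0) (hL : yL ^ 2 > 4 * vL)
    (hRL : RL = Real.sqrt (yL ^ 2 - 4 * vL))
    (hyD : yD = yL - RL) (hvD : vD = (yL - RL) ^ 2 / 4) :
    yD ^ 2 = 4 * vD ∧
    yD = vD * (yL + RL) / (2 * vL) + (yL - RL) / 2 ∧
    Real.sqrt (yD ^ 2 - 4 * vD) - yD = RL - yL ∧
    (yL + RL) / (2 * vL) = 2 / yD :=
  stmt10_general vL yL RL yD vD hvL hL hRL hyD hvD
end

section
/- Let v : ℝ × (0,∞) → (0,∞) be continuously differentiable and satisfy the scalar conservation law ∂_t v − ∂_x(2/√v) = 0. Then the pair (v, y) with y := −2√v (so that y² = 4v and y < 0) is a classical solution of the full system: ∂_t v + ∂_x(y/v) = 0 and ∂_t y + ∂_x(1/v) = 0. In particular the curve y² = 4v is an invariant curve of the system. -/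
/-!
On the branch `y = -2√v` one has `y / v = -2 / √v`, so the first equation of the system is
exactly the scalar law. For the second, the chain rule gives `∂_t y = -∂_t v / √v`, and the
scalar law `∂_t v = ∂_x (2 / √v) = -∂_x v / v^{3/2}` turns this into `∂_x v / v² = -∂_x (1 / v)`.
-/

open Real

lemma neg_two_mul_sqrt_div_self (a : ℝ) : -2 * √a / a = -(2 / √a) := by
  rw [mul_div_assoc, sqrt_div_self']
  ring

lemma HasDerivAt.two_div_sqrt {f : ℝ → ℝ} {f' x : ℝ} (hf : HasDerivAt f f' x) (hx : 0 < f x) :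
    HasDerivAt (fun z => 2 / √(f z)) (-f' / (f x * √(f x))) x := by
  have hs : √(f x) ≠ 0 := by positivity
  refine ((hasDerivAt_const x (2 : ℝ)).fun_div (hf.sqrt hx.ne') hs).congr_deriv ?_
  rw [sq_sqrt hx.le]
  field_simp
  ring

lemma HasDerivAt.neg_two_mul_sqrt {f : ℝ → ℝ} {f' x : ℝ} (hf : HasDerivAt f f' x)
    (hx : 0 < f x) : HasDerivAt (fun z => -2 * √(f z)) (-f' / √(f x)) x := by
  have hs : √(f x) ≠ 0 := by positivity
  refine ((hf.sqrt hx.ne').const_mul (-2)).congr_deriv ?_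
  field_simp

theorem stmt11_general (v : ℝ → ℝ → ℝ)
    -- v = v(x, t) is positive and continuously differentiable on ℝ × (0,∞)
    (hpos : ∀ x t : ℝ, 0 < t → 0 < v x t)
    (hdiffx : ∀ x t : ℝ, 0 < t → DifferentiableAt ℝ (fun z => v z t) x)
    -- the scalar conservation law  ∂_t v − ∂_x (2/√v) = 0
    (hlaw : ∀ x t : ℝ, 0 < t →
      HasDerivAt (fun s => v x s) (deriv (fun z => 2 / Real.sqrt (v z t)) x) t) :
    -- then (v, y) with y = −2√v is a classical solution of the full system:
    -- ∂_t v + ∂_x (y/v) = 0  and  ∂_t y + ∂_x (1/v) = 0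
    ∀ x t : ℝ, 0 < t →
      HasDerivAt (fun s => v x s)
        (-(deriv (fun z => (-2 * Real.sqrt (v z t)) / v z t) x)) t ∧
      HasDerivAt (fun s => -2 * Real.sqrt (v x s))
        (-(deriv (fun z => 1 / v z t) x)) t := by
  intro x t ht
  have hv : 0 < v x t := hpos x t ht
  have hvx := (hdiffx x t ht).hasDerivAt
  have hvt := hlaw x t ht
  refine ⟨?_, ?_⟩
  · simpa only [neg_two_mul_sqrt_div_self, deriv.fun_neg, neg_neg] using hvt
  · rw [(hvx.two_div_sqrt hv).deriv] at hvt
    convert hvt.neg_two_mul_sqrt hv using 1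
    rw [((hasDerivAt_const x (1 : ℝ)).fun_div hvx hv.ne').deriv]
    have hs : √(v x t) ≠ 0 := by positivity
    field_simp
    rw [sq_sqrt hv.le]
    ring

theorem stmt11 (v : ℝ → ℝ → ℝ)
    -- v = v(x, t) is positive and continuously differentiable on ℝ × (0,∞)
    (hpos : ∀ x t : ℝ, 0 < t → 0 < v x t)
    (hC1 : ContDiffOn ℝ 1 (fun p : ℝ × ℝ => v p.1 p.2) (Set.univ ×ˢ Set.Ioi 0))
    (hdiffx : ∀ x t : ℝ, 0 < t → DifferentiableAt ℝ (fun z => v z t) x)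
    -- the scalar conservation law  ∂_t v − ∂_x (2/√v) = 0
    (hlaw : ∀ x t : ℝ, 0 < t →
      HasDerivAt (fun s => v x s) (deriv (fun z => 2 / Real.sqrt (v z t)) x) t) :
    -- then (v, y) with y = −2√v is a classical solution of the full system:
    -- ∂_t v + ∂_x (y/v) = 0  and  ∂_t y + ∂_x (1/v) = 0
    ∀ x t : ℝ, 0 < t →
      HasDerivAt (fun s => v x s)
        (-(deriv (fun z => (-2 * Real.sqrt (v z t)) / v z t) x)) t ∧
      HasDerivAt (fun s => -2 * Real.sqrt (v x s))
        (-(deriv (fun z => 1 / v z t) x)) t :=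
  stmt11_general v hpos hdiffx hlaw
end

section
/- The curve {(y₁, y₂) : y₁ > 0, y₂ = 2^{1/3}·y₁^{11/15}} is invariant for the planar vector field X(y₁, y₂) = ( (5/2)(y₁^{18/5}/y₂³ − 2y₁^{7/5}), (5/2)·y₁^{13/5}/y₂² − 4y₂·y₁^{2/5} ): at every point of the curve, X is tangent to the curve, i.e. whenever y₁ > 0 and y₂ = 2^{1/3}·y₁^{11/15} one has X₂(y₁, y₂) = (11/15)·2^{1/3}·y₁^{−4/15}·X₁(y₁, y₂). -/
/-!
Writing `a = 2^(1/3)` and `b = y₁^(1/15)`, every power in the statement is a monomial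
`aⁱ bʲ`, and on the curve `y₂ = a b¹¹`. Both sides of the tangency identity then reduce to
multiples of `a b¹⁷`, and the coefficients agree once `a³ = 2` is used.
-/

lemma Real.rpow_natCast_div_eq_pow {x : ℝ} (hx : 0 ≤ x) (n : ℕ) (d : ℝ) :
    x ^ ((n : ℝ) / d) = (x ^ (1 / d)) ^ n := by
  rw [← Real.rpow_mul_natCast hx, one_div_mul_eq_div]

lemma Real.rpow_neg_natCast_div_eq_inv_pow {x : ℝ} (hx : 0 ≤ x) (n : ℕ) (d : ℝ) :
    x ^ (-(n : ℝ) / d) = ((x ^ (1 / d)) ^ n)⁻¹ := by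
  rw [neg_div, Real.rpow_neg hx, Real.rpow_natCast_div_eq_pow hx]

lemma tangency_identity_monomial {a b : ℝ} (hb : b ≠ 0) (ha3 : a ^ 3 = 2) :
    (5 / 2) * b ^ 39 / (a * b ^ 11) ^ 2 - 4 * (a * b ^ 11) * b ^ 6 =
      (11 / 15) * a * (b ^ 4)⁻¹ * ((5 / 2) * (b ^ 54 / (a * b ^ 11) ^ 3 - 2 * b ^ 21)) := by
  have ha : a ≠ 0 := by rintro rfl; norm_num at ha3
  field_simp
  linear_combination (-10) * ha3

theorem stmt12 (y1 y2 : ℝ) (h1 : 0 < y1)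
    (h2 : y2 = (2 : ℝ) ^ ((1 : ℝ) / 3) * y1 ^ ((11 : ℝ) / 15)) :
    (5 / 2) * y1 ^ ((13 : ℝ) / 5) / y2 ^ 2 - 4 * y2 * y1 ^ ((2 : ℝ) / 5) =
      (11 / 15) * (2 : ℝ) ^ ((1 : ℝ) / 3) * y1 ^ (-(4 : ℝ) / 15) *
        ((5 / 2) * (y1 ^ ((18 : ℝ) / 5) / y2 ^ 3 - 2 * y1 ^ ((7 : ℝ) / 5))) := by
  have hcube : ((2 : ℝ) ^ ((1 : ℝ) / 3)) ^ 3 = 2 := by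
    rw [← Real.rpow_natCast_div_eq_pow (by norm_num)]
    norm_num
  have hb : y1 ^ ((1 : ℝ) / 15) ≠ 0 := (Real.rpow_pos_of_pos h1 _).ne'
  subst h2
  rw [show (13 : ℝ) / 5 = ((39 : ℕ) : ℝ) / 15 by norm_num,
    show (11 : ℝ) / 15 = ((11 : ℕ) : ℝ) / 15 by norm_num,
    show (2 : ℝ) / 5 = ((6 : ℕ) : ℝ) / 15 by norm_num,
    show (18 : ℝ) / 5 = ((54 : ℕ) : ℝ) / 15 by norm_num,
    show (7 : ℝ) / 5 = ((21 : ℕ) : ℝ) / 15 by norm_num,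
    show -(4 : ℝ) / 15 = -((4 : ℕ) : ℝ) / 15 by norm_num,
    Real.rpow_neg_natCast_div_eq_inv_pow h1.le]
  simp only [Real.rpow_natCast_div_eq_pow h1.le]
  exact tangency_identity_monomial hb hcube
end

section
/- The planar vector field X(y₁, y₂) = ( (5/2)(y₁^{18/5}/y₂³ − 2y₁^{7/5}), (5/2)·y₁^{13/5}/y₂² − 4y₂·y₁^{2/5} ) has no zero in the open quadrant: for all y₁ > 0 and y₂ > 0, X(y₁, y₂) ≠ (0, 0). Hence the origin is the unique equilibrium of the inner system on the closed quadrant. -/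
/-!
With `a = y₁^{11/5}` and `b = y₂³`, the components factor as
`X₁ = (5/2) y₁^{7/5} (a - 2b) / b` and `X₂ = y₁^{2/5} ((5/2) a - 4b) / y₂²`.
A common zero would give `a = 2b` and `5a = 8b`, hence `b = 0`, impossible for `y₂ > 0`.
-/

open Real

lemma rpow_eighteen_fifths {x : ℝ} (hx : 0 < x) :
    x ^ ((18 : ℝ) / 5) = x ^ ((7 : ℝ) / 5) * x ^ ((11 : ℝ) / 5) := by
  rw [← rpow_add hx]; norm_num

lemma rpow_thirteen_fifths {x : ℝ} (hx : 0 < x) :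
    x ^ ((13 : ℝ) / 5) = x ^ ((2 : ℝ) / 5) * x ^ ((11 : ℝ) / 5) := by
  rw [← rpow_add hx]; norm_num

lemma inner_field_fst_eq_zero_iff {y1 y2 : ℝ} (h1 : 0 < y1) (h2 : y2 ≠ 0) :
    (5 / 2) * (y1 ^ ((18 : ℝ) / 5) / y2 ^ 3 - 2 * y1 ^ ((7 : ℝ) / 5)) = 0 ↔
      y1 ^ ((11 : ℝ) / 5) = 2 * y2 ^ 3 := by
  have hp : y1 ^ ((7 : ℝ) / 5) ≠ 0 := (rpow_pos_of_pos h1 _).ne'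
  have hfactor : (5 / 2) * (y1 ^ ((18 : ℝ) / 5) / y2 ^ 3 - 2 * y1 ^ ((7 : ℝ) / 5)) =
      (5 / 2) * y1 ^ ((7 : ℝ) / 5) / y2 ^ 3 * (y1 ^ ((11 : ℝ) / 5) - 2 * y2 ^ 3) := by
    rw [rpow_eighteen_fifths h1]; field_simp
  rw [hfactor, mul_eq_zero, sub_eq_zero, or_iff_right (by positivity)]

lemma inner_field_snd_eq_zero_iff {y1 y2 : ℝ} (h1 : 0 < y1) (h2 : y2 ≠ 0) :
    (5 / 2) * y1 ^ ((13 : ℝ) / 5) / y2 ^ 2 - 4 * y2 * y1 ^ ((2 : ℝ) / 5) = 0 ↔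
      5 * y1 ^ ((11 : ℝ) / 5) = 8 * y2 ^ 3 := by
  have hp : y1 ^ ((2 : ℝ) / 5) ≠ 0 := (rpow_pos_of_pos h1 _).ne'
  have hfactor : (5 / 2) * y1 ^ ((13 : ℝ) / 5) / y2 ^ 2 - 4 * y2 * y1 ^ ((2 : ℝ) / 5) =
      y1 ^ ((2 : ℝ) / 5) / (2 * y2 ^ 2) * (5 * y1 ^ ((11 : ℝ) / 5) - 8 * y2 ^ 3) := by
    rw [rpow_thirteen_fifths h1]; field_simp; ring
  rw [hfactor, mul_eq_zero, sub_eq_zero, or_iff_right (by positivity)]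

theorem stmt13 (y1 y2 : ℝ) (h1 : 0 < y1) (h2 : 0 < y2) :
    ((5 / 2) * (y1 ^ ((18 : ℝ) / 5) / y2 ^ 3 - 2 * y1 ^ ((7 : ℝ) / 5)),
     (5 / 2) * y1 ^ ((13 : ℝ) / 5) / y2 ^ 2 - 4 * y2 * y1 ^ ((2 : ℝ) / 5)) ≠
      ((0 : ℝ), (0 : ℝ)) := by
  intro h
  obtain ⟨hfst, hsnd⟩ := Prod.ext_iff.mp h
  rw [inner_field_fst_eq_zero_iff h1 h2.ne'] at hfst
  rw [inner_field_snd_eq_zero_iff h1 h2.ne'] at hsnd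
  have hb : 0 < y2 ^ 3 := by positivity
  linarith
end

section
/- Define the vector field X on {(v, y, v₁, v₂, ξ) ∈ ℝ⁵ : v ≠ 0} by X(v, y, v₁, v₂, ξ) = ( v₁, v₂, v₂/v − y·v₁/v² − ξ·v₁, −v₁/v² − ξ·v₂, 0 ). At any point p = (v, y, 0, 0, ξ) with v ≠ 0 and y² ≥ 4v, the Jacobian matrix DX(p) has characteristic polynomial t³·(t − (λ₁(v,y) − ξ))·(t − (λ₂(v,y) − ξ)), where λ₁(v,y) = (−y − √(y²−4v))/(2v²) and λ₂(v,y) = (−y + √(y²−4v))/(2v²). In particular the eigenvalues of DX(p) are 0 with multiplicity 3, together with λ₁(v,y) − ξ and λ₂(v,y) − ξ. -/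
/-- The fast-time vector field of the Dafermos regularization at ε = 0,
in the variables (v, y, v₁, v₂, ξ). -/
noncomputable def Xfield (p : Fin 5 → ℝ) : Fin 5 → ℝ :=
  ![p 2, p 3,
    p 3 / p 0 - p 1 * p 2 / (p 0) ^ 2 - p 4 * p 2,
    -(p 2) / (p 0) ^ 2 - p 4 * p 3,
    0]

/-!
At an equilibrium (v₁ = v₂ = 0) only the v₁- and v₂-derivatives of X survive: every component
of X is `α q * v₁ + β q * v₂` with `α`, `β` differentiable where v ≠ 0, so the product rule shows
that the Jacobian has just two nonzero columns, `α p` and `β p`. Its characteristic polynomial is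
therefore `t³` times that of the 2×2 block `[[-y/v² - ξ, 1/v], [-1/v², -ξ]]`, whose trace and
determinant are the sum and product of `λ₁ - ξ` and `λ₂ - ξ` once `√(y² - 4v)² = y² - 4v`.
-/

open Polynomial Matrix

theorem charpoly_vecMulVec_single_two_add_single_three {R : Type*} [CommRing R] (u w : Fin 5 → R) :
    charpoly (vecMulVec u (Pi.single 2 1) + vecMulVec w (Pi.single 3 1)) =
      X ^ 3 * (X ^ 2 - C (u 2 + w 3) * X + C (u 2 * w 3 - w 2 * u 3)) := by
  rw [charpoly, det_succ_row_zero]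
  simp only [Fin.isValue, charmatrix_apply, Matrix.add_apply, vecMulVec_apply, Pi.single_apply,
    mul_ite, mul_one, mul_zero, map_add, submatrix, Fin.succAbove, det_succ_row_zero, of_apply,
    Fin.succ_zero_eq_one, Fin.succ_one_eq_two, Fin.reduceSucc, det_unique, Fin.default_eq_zero,
    Fin.castSucc_zero, Fin.sum_univ_succ, Fin.coe_ofNat_eq_mod, Nat.zero_mod, pow_zero, one_mul,
    lt_self_iff_false, ↓reduceIte, Fin.castSucc_one, Finset.univ_unique, Fin.val_succ,
    Fin.val_eq_zero, zero_add, pow_one, Fin.castSucc_succ, neg_mul, neg_sub, Fin.succ_pos,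
    Finset.sum_singleton, not_lt_zero, Fin.reduceCastSucc, Fin.reduceLT, ite_eq_right_iff,
    Fin.reduceEq, imp_false, not_lt, ite_eq_left_iff, not_le,
    Fin.lt_one_iff, diagonal_apply_eq, map_zero, add_zero, sub_zero, zero_le, ne_eq,
    not_false_eq_true, diagonal_apply_ne, sub_self, zero_sub, mul_neg, zero_mul, neg_zero, neg_neg,
    one_ne_zero, Finset.sum_const_zero, map_sub, map_mul]
  ring

theorem X_sq_sub_C_mul_X_add_C_eq_mul {R : Type*} [CommRing R] {s t r₁ r₂ : R}
    (hs : r₁ + r₂ = s) (ht : r₁ * r₂ = t) :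
    X ^ 2 - C s * X + C t = (X - C r₁) * (X - C r₂) := by
  subst hs ht
  simp only [map_add, map_mul]
  ring

theorem fderiv_mul_apply_add_mul_apply_of_eq_zero {𝕜 ι : Type*} [NontriviallyNormedField 𝕜]
    [Fintype ι] {f g : (ι → 𝕜) → 𝕜} {p : ι → 𝕜} {k l : ι} (hf : DifferentiableAt 𝕜 f p)
    (hg : DifferentiableAt 𝕜 g p) (hk : p k = 0) (hl : p l = 0) (h : ι → 𝕜) :
    fderiv 𝕜 (fun q => f q * q k + g q * q l) p h = f p * h k + g p * h l := by
  have hderiv : HasFDerivAt (fun q => f q * q k + g q * q l) _ p :=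
    (hf.hasFDerivAt.mul (hasFDerivAt_apply k p)).add (hg.hasFDerivAt.mul (hasFDerivAt_apply l p))
  simp [hderiv.fderiv, hk, hl]

namespace Xfield

noncomputable def coeff₁ (q : Fin 5 → ℝ) : Fin 5 → ℝ :=
  ![1, 0, -q 1 / q 0 ^ 2 - q 4, -(q 0 ^ 2)⁻¹, 0]

noncomputable def coeff₂ (q : Fin 5 → ℝ) : Fin 5 → ℝ :=
  ![0, 1, (q 0)⁻¹, -q 4, 0]

theorem apply_eq_coeff (q : Fin 5 → ℝ) (i : Fin 5) :
    Xfield q i = coeff₁ q i * q 2 + coeff₂ q i * q 3 := by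
  fin_cases i <;>
    simp only [Xfield, coeff₁, coeff₂, Fin.zero_eta, Fin.mk_one, Fin.reduceFinMk, cons_val_zero,
      cons_val_one, cons_val] <;>
    ring

theorem differentiableAt_coeff₁ {q : Fin 5 → ℝ} (hq : q 0 ≠ 0) (i : Fin 5) :
    DifferentiableAt ℝ (fun q => coeff₁ q i) q := by
  fin_cases i <;>
    simp only [coeff₁, Fin.zero_eta, Fin.mk_one, Fin.reduceFinMk, cons_val_zero, cons_val_one,
      cons_val] <;>
    fun_prop (disch := positivity)

theorem differentiableAt_coeff₂ {q : Fin 5 → ℝ} (hq : q 0 ≠ 0) (i : Fin 5) :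
    DifferentiableAt ℝ (fun q => coeff₂ q i) q := by
  fin_cases i <;>
    simp only [coeff₂, Fin.zero_eta, Fin.mk_one, Fin.reduceFinMk, cons_val_zero, cons_val_one,
      cons_val] <;>
    fun_prop (disch := positivity)

theorem jacobian_eq_of_apply_two_eq_zero_of_apply_three_eq_zero {p : Fin 5 → ℝ} (h0 : p 0 ≠ 0)
    (h2 : p 2 = 0) (h3 : p 3 = 0) :
    Matrix.of (fun i j : Fin 5 => fderiv ℝ (fun q => Xfield q i) p (Pi.single j 1)) =
      vecMulVec (coeff₁ p) (Pi.single 2 1) + vecMulVec (coeff₂ p) (Pi.single 3 1) := by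
  ext i j
  simp only [of_apply, apply_eq_coeff]
  rw [fderiv_mul_apply_add_mul_apply_of_eq_zero (differentiableAt_coeff₁ h0 i)
    (differentiableAt_coeff₂ h0 i) h2 h3]
  simp [vecMulVec_apply, Pi.single_apply, eq_comm]

end Xfield

theorem stmt16 (v y ξ : ℝ) (hv : v ≠ 0) (h : y ^ 2 ≥ 4 * v) :
    Matrix.charpoly
        (Matrix.of fun i j : Fin 5 =>
          fderiv ℝ (fun q => Xfield q i) (![v, y, 0, 0, ξ]) (Pi.single j 1)) =
      Polynomial.X ^ 3 *
        (Polynomial.X - Polynomial.C ((-y - Real.sqrt (y ^ 2 - 4 * v)) / (2 * v ^ 2) - ξ)) *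
        (Polynomial.X - Polynomial.C ((-y + Real.sqrt (y ^ 2 - 4 * v)) / (2 * v ^ 2) - ξ)) := by
  rw [Xfield.jacobian_eq_of_apply_two_eq_zero_of_apply_three_eq_zero (by simpa) rfl rfl,
    charpoly_vecMulVec_single_two_add_single_three, mul_assoc]
  have hs : Real.sqrt (y ^ 2 - 4 * v) ^ 2 = y ^ 2 - 4 * v := Real.sq_sqrt (by linarith)
  congr 1
  apply X_sq_sub_C_mul_X_add_C_eq_mul
  · simp only [Xfield.coeff₁, Xfield.coeff₂, cons_val_zero, cons_val_one, cons_val]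
    field_simp
    ring
  · simp only [Xfield.coeff₁, Xfield.coeff₂, cons_val_zero, cons_val_one, cons_val]
    field_simp
    linear_combination -hs
end
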